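/- For all n ≥ 1, all x_{1:n} ∈ {0,1}^n, and all θ ∈ [0,1], the parameter redundancy of the KT estimator is uniformly bounded: log₂(θ^b (1−θ)^a) − log₂ KT(x_{1:n}) ≤ (1/2)·log₂ n + 1, where a and b are the numbers of zeros and ones in x_{1:n} (with the convention that the left-hand side is −∞ when θ^b(1−θ)^a = 0). -/

import Mathlib

/-- The Krichevsky–Trofimov estimator: for a binary string with `b` ones and `a`
zeros, `KT(x_{1:n}) = ∫₀¹ θ^b (1-θ)^a · π⁻¹ θ^{-1/2} (1-θ)^{-1/2} dθ`. -/
noncomputable def KT (l : List Bool) : ℝ :=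
  ∫ θ in (0 : ℝ)..1,
    θ ^ l.count true * (1 - θ) ^ l.count false *
      (Real.pi⁻¹ * θ ^ (-(1 / 2) : ℝ) * (1 - θ) ^ (-(1 / 2) : ℝ))

/-!
KT(x) equals `B(b + 1/2, a + 1/2) / π`, and by weighted AM-GM the likelihood `θ^b (1-θ)^a` never
exceeds its maximum `a^a b^b / n^n`. It therefore suffices to bound the logarithm of the ratio of
maximum likelihood to KT probability by `log 2 + ½ log n`. This is an equality for `n = 1`, and
appending a one to a string of length `n ≥ 1` raises that logarithm by at most `½ log ((n+1)/n)`: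
this comes down to the monotonicity of `ψ(x) = (x+1) log (x+1) - x log x - log (x + ½)`, whose
derivative `log (1 + 1/x) - 1/(x + ½)` is the tail of a series of positive terms. Appending a zero
is the same by the symmetry of the Beta function.
-/

open Real Set ProbabilityTheory

namespace ProbabilityTheory

theorem integral_rpow_mul_one_sub_rpow {α β : ℝ} (hα : 0 < α) (hβ : 0 < β) :
    ∫ x in (0 : ℝ)..1, x ^ (α - 1) * (1 - x) ^ (β - 1) = beta α β := by
  have hcast : ((∫ x in (0 : ℝ)..1, x ^ (α - 1) * (1 - x) ^ (β - 1) : ℝ) : ℂ)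
      = Complex.betaIntegral α β := by
    rw [← intervalIntegral.integral_ofReal]
    refine intervalIntegral.integral_congr fun x hx => ?_
    rw [uIcc_of_le zero_le_one] at hx
    push_cast [Complex.ofReal_cpow hx.1, Complex.ofReal_cpow (sub_nonneg.2 hx.2)]
    rfl
  rw [beta_eq_betaIntegralReal α β hα hβ, ← hcast, Complex.ofReal_re]

theorem beta_comm (α β : ℝ) : beta α β = beta β α := by
  rw [beta, beta, mul_comm, add_comm]

theorem beta_add_one_left {α β : ℝ} (hα : 0 < α) (hβ : 0 < β) :
    beta (α + 1) β = beta α β * (α / (α + β)) := by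
  rw [beta, beta, add_right_comm, Gamma_add_one hα.ne', Gamma_add_one (by positivity)]
  have := (Gamma_pos_of_pos (add_pos hα hβ)).ne'
  field_simp

theorem beta_one_half_one_half : beta (1 / 2) (1 / 2) = π := by
  rw [beta, add_halves, Gamma_one, Gamma_one_half_eq, div_one, mul_self_sqrt pi_pos.le]

end ProbabilityTheory

theorem inv_add_half_le_log_one_add_inv {x : ℝ} (hx : 0 < x) :
    (x + 1 / 2)⁻¹ ≤ log (1 + x⁻¹) := by
  refine le_trans (le_of_eq ?_) (le_hasSum (hasSum_log_one_add_inv hx) 0 fun k _ => by positivity)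
  norm_num
  field_simp

theorem natCast_pow_self_pos (k : ℕ) : 0 < (k : ℝ) ^ k := by
  exact_mod_cast Nat.pow_self_pos

theorem natCast_pow_self_mul_div_pow (k : ℕ) (z : ℝ) : (k : ℝ) ^ k * (z / k) ^ k = z ^ k := by
  rcases k.eq_zero_or_pos with rfl | hk
  · simp
  · rw [← mul_pow, mul_div_cancel₀ z (by positivity)]

theorem pow_mul_pow_mul_add_pow_le {x y : ℝ} (hx : 0 ≤ x) (hy : 0 ≤ y) (p q : ℕ) :
    x ^ p * y ^ q * ((p : ℝ) + q) ^ (p + q) ≤ (p : ℝ) ^ p * (q : ℝ) ^ q * (x + y) ^ (p + q) := by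
  rcases (p + q).eq_zero_or_pos with h | h
  · obtain ⟨rfl, rfl⟩ := Nat.add_eq_zero_iff.mp h
    simp
  set n : ℝ := p + q with hn_def
  have hn : 0 < n := by rw [hn_def]; exact_mod_cast h
  -- For `k = 0` the junk point `n * z / 0 = 0` carries weight `0`, so nothing is lost.
  have hmean (k : ℕ) {z : ℝ} (hz : 0 ≤ z) : (k / n) * (n * z / k) ≤ z := by
    rcases k.eq_zero_or_pos with rfl | hk
    · simpa using hz
    · exact (by field_simp : (k / n) * (n * z / k) = z).le
  have hpow (k : ℕ) {z : ℝ} (hz : 0 ≤ z) :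
      ((n * z / k) ^ (k / n : ℝ)) ^ (p + q) = (n * z / k) ^ k := by
    rw [← rpow_natCast, ← rpow_mul (by positivity), ← rpow_natCast]
    congr 1
    push_cast
    rw [← hn_def]
    field_simp
  have hamgm := geom_mean_le_arith_mean2_weighted (w₁ := p / n) (w₂ := q / n)
    (p₁ := n * x / p) (p₂ := n * y / q) (by positivity) (by positivity) (by positivity)
    (by positivity) (by rw [← add_div, ← hn_def, div_self hn.ne'])
  have := pow_le_pow_left₀ (by positivity) (hamgm.trans (add_le_add (hmean p hx) (hmean q hy)))
    (p + q)
  rw [mul_pow, hpow p hx, hpow q hy] at this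
  calc x ^ p * y ^ q * n ^ (p + q)
      = (p : ℝ) ^ p * (q : ℝ) ^ q * ((n * x / p) ^ p * (n * y / q) ^ q) := by
        rw [mul_mul_mul_comm, natCast_pow_self_mul_div_pow, natCast_pow_self_mul_div_pow,
          mul_pow, mul_pow, pow_add]
        ring
    _ ≤ (p : ℝ) ^ p * (q : ℝ) ^ q * (x + y) ^ (p + q) :=
        mul_le_mul_of_nonneg_left this (by positivity)

noncomputable def ktProb (a b : ℕ) : ℝ := beta (b + 1 / 2) (a + 1 / 2) / π

theorem natCast_add_neg_half_ne_zero (k : ℕ) : (k : ℝ) + -(1 / 2) ≠ 0 := by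
  intro h
  have : (2 * k : ℝ) = 1 := by linarith
  norm_cast at this
  omega

theorem KT_eq_ktProb (l : List Bool) : KT l = ktProb (l.count false) (l.count true) := by
  rw [KT, ktProb, ← integral_rpow_mul_one_sub_rpow (by positivity) (by positivity),
    ← intervalIntegral.integral_div]
  refine intervalIntegral.integral_congr fun x hx => ?_
  rw [uIcc_of_le zero_le_one] at hx
  -- The exponent `k - 1/2` is never `0`, so `rpow_add'` splits it even where the base vanishes.
  have e (k : ℕ) : (k : ℝ) + 1 / 2 - 1 = k + -(1 / 2) := by ring
  simp only [e, rpow_add' hx.1 (natCast_add_neg_half_ne_zero _),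
    rpow_add' (sub_nonneg.2 hx.2) (natCast_add_neg_half_ne_zero _), rpow_natCast]
  field_simp

theorem ktProb_pos (a b : ℕ) : 0 < ktProb a b :=
  div_pos (beta_pos (by positivity) (by positivity)) pi_pos

theorem ktProb_comm (a b : ℕ) : ktProb a b = ktProb b a := by
  rw [ktProb, ktProb, beta_comm]

theorem ktProb_zero_zero : ktProb 0 0 = 1 := by
  rw [ktProb, Nat.cast_zero, zero_add, beta_one_half_one_half, div_self pi_ne_zero]

theorem ktProb_add_one_right (a b : ℕ) :
    ktProb a (b + 1) = ktProb a b * ((b + 1 / 2) / (a + b + 1)) := by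
  rw [ktProb, ktProb, Nat.cast_succ, add_right_comm,
    beta_add_one_left (by positivity) (by positivity)]
  ring_nf

noncomputable def maxLogLik (a b : ℕ) : ℝ := a * log a + b * log b - (a + b) * log (a + b)

theorem log_pow_mul_one_sub_pow_le_maxLogLik {θ : ℝ} (h0 : 0 ≤ θ) (h1 : θ ≤ 1) {a b : ℕ}
    (hpos : 0 < θ ^ b * (1 - θ) ^ a) : log (θ ^ b * (1 - θ) ^ a) ≤ maxLogLik a b := by
  have hamgm := pow_mul_pow_mul_add_pow_le h0 (sub_nonneg.2 h1) b a
  rw [add_sub_cancel, one_pow, mul_one, ← Nat.cast_add] at hamgm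
  have := log_le_log (mul_pos hpos (natCast_pow_self_pos _)) hamgm
  rw [log_mul hpos.ne' (natCast_pow_self_pos _).ne',
    log_mul (natCast_pow_self_pos b).ne' (natCast_pow_self_pos a).ne',
    log_pow, log_pow, log_pow, Nat.cast_add] at this
  rw [maxLogLik, add_comm (a : ℝ)]
  linarith

noncomputable def psi (x : ℝ) : ℝ := (x + 1) * log (x + 1) - x * log x - log (x + 1 / 2)

theorem hasDerivAt_psi {x : ℝ} (hx : 0 < x) :
    HasDerivAt psi (log (x + 1) - log x - (x + 1 / 2)⁻¹) x := by
  have h₁ := (hasDerivAt_mul_log (x := x + 1) (by positivity)).comp_add_const x 1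
  have h₂ := hasDerivAt_mul_log hx.ne'
  have h₃ := (hasDerivAt_log (x := x + 1 / 2) (by positivity)).comp_add_const x (1 / 2)
  exact ((h₁.sub h₂).sub h₃).congr_deriv (by ring)

theorem monotoneOn_psi : MonotoneOn psi (Ici 0) := by
  refine monotoneOn_of_hasDerivWithinAt_nonneg (convex_Ici 0) ?_
    (fun x hx => (hasDerivAt_psi (by simpa using hx)).hasDerivWithinAt) fun x hx => ?_
  · have hne : ∀ x ∈ Ici (0 : ℝ), x + 1 / 2 ≠ 0 := fun x hx => by simp at hx; positivity
    unfold psi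
    fun_prop (disch := assumption)
  · rw [interior_Ici, mem_Ioi] at hx
    rw [← log_div (by positivity) hx.ne', add_div, div_self hx.ne', one_div, sub_nonneg]
    exact inv_add_half_le_log_one_add_inv hx

theorem psi_le {x y : ℝ} (hx : 0 ≤ x) (hxy : x ≤ y) (hy : 0 < y) :
    psi x ≤ (y + 1 / 2) * (log (y + 1) - log y) := by
  have hgm : log y + log (y + 1) ≤ 2 * log (y + 1 / 2) := by
    rw [← log_mul hy.ne' (by positivity), two_mul, ← log_mul (by positivity) (by positivity)]
    exact log_le_log (by positivity) (by nlinarith)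
  have := monotoneOn_psi hx (hx.trans hxy) hxy
  unfold psi at this ⊢
  linarith

theorem maxLogLik_sub_log_ktProb_le_add_one_right {a b : ℕ} (hn : 1 ≤ a + b)
    (h : maxLogLik a b - log (ktProb a b) ≤ log 2 + 1 / 2 * log (a + b)) :
    maxLogLik a (b + 1) - log (ktProb a (b + 1)) ≤ log 2 + 1 / 2 * log (a + (b + 1 : ℕ)) := by
  have hn' : (1 : ℝ) ≤ a + b := by exact_mod_cast hn
  have hpsi := psi_le (Nat.cast_nonneg b) (le_add_of_nonneg_left (Nat.cast_nonneg a))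
    (by linarith)
  have hK : log (ktProb a (b + 1)) = log (ktProb a b) + log (b + 1 / 2) - log (a + b + 1) := by
    rw [ktProb_add_one_right, log_mul (ktProb_pos a b).ne' (by positivity),
      log_div (by positivity) (by positivity)]
    ring
  rw [maxLogLik, hK, Nat.cast_succ, ← add_assoc]
  rw [maxLogLik] at h
  rw [psi] at hpsi
  linarith

theorem maxLogLik_sub_log_ktProb_le (a b : ℕ) :
    maxLogLik a b - log (ktProb a b) ≤ log 2 + 1 / 2 * log (a + b) := by
  have hzero (b : ℕ) : maxLogLik 0 b - log (ktProb 0 b) ≤ log 2 + 1 / 2 * log ((0 : ℕ) + b) := by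
    induction b with
    | zero => simp [maxLogLik, ktProb_zero_zero, log_nonneg one_le_two]
    | succ b ih =>
      rcases b.eq_zero_or_pos with rfl | hb
      · simp [maxLogLik, ktProb_add_one_right, ktProb_zero_zero]
      · exact maxLogLik_sub_log_ktProb_le_add_one_right (by omega) ih
  induction b with
  | zero => simpa [maxLogLik, ktProb_comm, add_comm] using hzero a
  | succ b ih =>
    rcases a.eq_zero_or_pos with rfl | ha
    · exact hzero (b + 1)
    · exact maxLogLik_sub_log_ktProb_le_add_one_right (by omega) ih

theorem kt_parameter_redundancy_general (l : List Bool)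
    (θ : ℝ) (hθ : θ ∈ Set.Icc (0 : ℝ) 1)
    (hpos : 0 < θ ^ l.count true * (1 - θ) ^ l.count false) :
    Real.logb 2 (θ ^ l.count true * (1 - θ) ^ l.count false) - Real.logb 2 (KT l)
      ≤ 1 / 2 * Real.logb 2 l.length + 1 := by
  have hML := log_pow_mul_one_sub_pow_le_maxLogLik hθ.1 hθ.2 hpos
  have hKT := maxLogLik_sub_log_ktProb_le (l.count false) (l.count true)
  rw [← KT_eq_ktProb, ← Nat.cast_add, List.count_false_add_count_true] at hKT
  have hlog2 : 0 < log 2 := log_pos one_lt_two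
  rw [logb, logb, logb, ← sub_div, div_le_iff₀ hlog2, add_mul, one_mul, mul_assoc,
    div_mul_cancel₀ _ hlog2.ne']
  linarith

/-- For all `n ≥ 1`, all `x_{1:n} ∈ {0,1}ⁿ` and all `θ ∈ [0,1]`,
the parameter redundancy of the KT estimator is uniformly bounded:
`log₂(θ^b (1-θ)^a) - log₂ KT(x_{1:n}) ≤ ½ log₂ n + 1`, where `a` and `b` are the
numbers of zeros and ones in `x_{1:n}`.  (The convention that the left-hand side is
`-∞` when `θ^b (1-θ)^a = 0` is encoded by assuming `0 < θ^b (1-θ)^a`, the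
inequality being trivial otherwise.) -/
theorem kt_parameter_redundancy (l : List Bool) (hl : l ≠ [])
    (θ : ℝ) (hθ : θ ∈ Set.Icc (0 : ℝ) 1)
    (hpos : 0 < θ ^ l.count true * (1 - θ) ^ l.count false) :
    Real.logb 2 (θ ^ l.count true * (1 - θ) ^ l.count false) - Real.logb 2 (KT l)
      ≤ 1 / 2 * Real.logb 2 l.length + 1 :=
  kt_parameter_redundancy_general l θ hθ hpos
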